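/- Let 𝒫 be a finite set of pairwise disjoint upward paths in ℝ². Then the transitive closure ≺* of the relation ≺ restricted to 𝒫 is a strict partial order on 𝒫 (irreflexive and transitive, hence also asymmetric). -/

import Mathlib

open Set

/-- An upward path: a continuous injective curve on `[0,1]` in `ℝ²` whose
y-coordinate is strictly monotone increasing. -/
structure UpwardPath where
  toFun : ℝ → ℝ × ℝ
  continuousOn : ContinuousOn toFun (Set.Icc 0 1)
  injOn : Set.InjOn toFun (Set.Icc 0 1)
  strictMonoY : StrictMonoOn (fun t => (toFun t).2) (Set.Icc 0 1)

namespace UpwardPath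

/-- The image (trace) of an upward path in the plane. -/
def image (P : UpwardPath) : Set (ℝ × ℝ) := P.toFun '' Set.Icc 0 1

/-- The set of points strictly to the right of `P`, at heights in the y-range of `P`. -/
def Right (P : UpwardPath) : Set (ℝ × ℝ) :=
  {p | (P.toFun 0).2 ≤ p.2 ∧ p.2 ≤ (P.toFun 1).2 ∧
    ∀ u' : ℝ, (u', p.2) ∈ P.image → u' < p.1}

/-- The set of points strictly to the left of `P`, at heights in the y-range of `P`. -/
def Left (P : UpwardPath) : Set (ℝ × ℝ) :=
  {p | (P.toFun 0).2 ≤ p.2 ∧ p.2 ≤ (P.toFun 1).2 ∧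
    ∀ u' : ℝ, (u', p.2) ∈ P.image → p.1 < u'}

/-- `P.Prec Q` (written `P ≺ Q`): some point of `Q` lies strictly to the right
(same y-coordinate, larger x-coordinate) of some point of `P`. -/
def Prec (P Q : UpwardPath) : Prop :=
  ∃ p ∈ P.image, ∃ q ∈ Q.image, p.2 = q.2 ∧ p.1 < q.1

/-- The y-range of an upward path. -/
def yRange (P : UpwardPath) : Set ℝ := Set.Icc (P.toFun 0).2 (P.toFun 1).2

end UpwardPath

/-!
Two disjoint upward paths cannot swap sides: on their common height range, an interval, the
difference of their x-coordinates is continuous and never zero. So `P ≺ Q` means that `P` lies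
left of `Q` at every common height. In a `≺`-cycle, let `Q` be a path whose top is lowest, with
predecessor `P` and successor `R`. Both `P` and `R` meet the height range of `Q` and end no lower
than `Q`, so at the top height of `Q` the three are present with `P` left of `Q` left of `R`,
whence `P ≺ R`. Bypassing `Q` shortens the cycle, down to a loop `P ≺ P`, which is impossible.
-/

section Valley

open List Relation

variable {α β : Type*} [LinearOrder β] {r : α → α → Prop} {h : α → β}

theorem isChain_append_of_isChain_append_cons
    (hbypass : ∀ ⦃a b c⦄, r a b → r b c → h b ≤ h a → h b ≤ h c → r a c)
    {l₁ l₂ : List α} {m : α} (hc : IsChain r (l₁ ++ m :: l₂))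
    (h₁ : ∀ x ∈ l₁, h m ≤ h x) (h₂ : ∀ y ∈ l₂, h m ≤ h y) : IsChain r (l₁ ++ l₂) := by
  obtain ⟨hc₁, hc₂, hlink⟩ := isChain_append.1 hc
  refine hc₁.append hc₂.tail fun x hx y hy => hbypass (hlink x hx m rfl) (hc₂.rel_head? hy)
    (h₁ x (mem_of_getLast? hx)) (h₂ y (mem_of_mem_head? hy))

/-- Bypass a vertex of the closed walk where `h` is minimal; when that vertex is the base point,
the walk is re-based at its successor. -/
theorem not_isChain_cons_append_singleton_self (hirr : ∀ a, ¬ r a a)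
    (hbypass : ∀ ⦃a b c⦄, r a b → r b c → h b ≤ h a → h b ≤ h c → r a c)
    (a : α) (l : List α) : ¬ IsChain r (a :: (l ++ [a])) := by
  intro hc
  obtain ⟨m, hm, hmin⟩ :=
    Set.exists_min_image {x | x ∈ a :: l} h (a :: l).finite_toSet ⟨a, mem_cons_self⟩
  rcases mem_cons.1 hm with rfl | hm
  · cases l with
    | nil => exact hirr m (isChain_pair.1 hc)
    | cons b t =>
      obtain ⟨hmb, hbt⟩ := isChain_cons_cons.1 hc
      have hc' : IsChain r ((b :: t) ++ m :: [b]) :=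
        isChain_split.2 ⟨hbt, isChain_pair.2 hmb⟩
      exact not_isChain_cons_append_singleton_self hirr hbypass b t
        (isChain_append_of_isChain_append_cons hbypass hc'
          (fun x hx => hmin x (mem_cons_of_mem _ hx)) (by simpa using hmin b (by simp)))
  · obtain ⟨l₁, l₂, rfl⟩ := append_of_mem hm
    refine not_isChain_cons_append_singleton_self hirr hbypass a (l₁ ++ l₂) ?_
    have := isChain_append_of_isChain_append_cons hbypass (l₁ := a :: l₁) (l₂ := l₂ ++ [a])
      (m := m) (by simpa using hc) (fun x hx => hmin x (by grind)) (fun x hx => hmin x (by grind))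
    simpa using this
termination_by l.length
decreasing_by all_goals simp_all

theorem exists_isChain_of_transGen {a b : α} (hab : TransGen r a b) :
    ∃ l, IsChain r (a :: (l ++ [b])) := by
  induction hab with
  | single hab => exact ⟨[], isChain_pair.2 hab⟩
  | tail _ hbc ih =>
    obtain ⟨l, hl⟩ := ih
    exact ⟨l ++ [_], by simpa using isChain_cons_split.2 ⟨hl, isChain_pair.2 hbc⟩⟩

theorem not_transGen_self_of_valley (hirr : ∀ a, ¬ r a a)
    (hbypass : ∀ ⦃a b c⦄, r a b → r b c → h b ≤ h a → h b ≤ h c → r a c) (a : α) :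
    ¬ TransGen r a a := fun haa =>
  let ⟨l, hl⟩ := exists_isChain_of_transGen haa
  not_isChain_cons_append_singleton_self hirr hbypass a l hl

end Valley

namespace UpwardPath

variable (P : UpwardPath)

theorem height_zero_le_height_one : (P.toFun 0).2 ≤ (P.toFun 1).2 :=
  (P.strictMonoY (left_mem_Icc.2 zero_le_one) (right_mem_Icc.2 zero_le_one) zero_lt_one).le

theorem height_mem_yRange {t : ℝ} (ht : t ∈ Icc (0 : ℝ) 1) : (P.toFun t).2 ∈ P.yRange :=
  ⟨P.strictMonoY.monotoneOn (left_mem_Icc.2 zero_le_one) ht ht.1,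
    P.strictMonoY.monotoneOn ht (right_mem_Icc.2 zero_le_one) ht.2⟩

noncomputable def heightIso : Icc (0 : ℝ) 1 ≃o Icc (P.toFun 0).2 (P.toFun 1).2 :=
  StrictMono.orderIsoOfSurjective (fun t => ⟨(P.toFun t).2, P.height_mem_yRange t.2⟩)
    (fun s t hst => P.strictMonoY s.2 t.2 hst) fun y =>
      let ⟨t, ht, hty⟩ := intermediate_value_Icc zero_le_one
        (continuous_snd.comp_continuousOn P.continuousOn) y.2
      ⟨⟨t, ht⟩, Subtype.ext hty⟩

theorem coe_heightIso (t : Icc (0 : ℝ) 1) : (P.heightIso t : ℝ) = (P.toFun t).2 := rfl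

noncomputable def xAt : ℝ → ℝ :=
  IccExtend P.height_zero_le_height_one fun y => (P.toFun (P.heightIso.symm y)).1

theorem continuous_xAt : Continuous P.xAt :=
  (continuous_fst.comp (P.continuousOn.comp_continuous
    (continuous_subtype_val.comp P.heightIso.symm.continuous)
    fun y => (P.heightIso.symm y).2)).Icc_extend'

variable {P}

theorem mem_image_iff {p : ℝ × ℝ} : p ∈ P.image ↔ p.2 ∈ P.yRange ∧ p.1 = P.xAt p.2 := by
  constructor
  · rintro ⟨t, ht, rfl⟩
    refine ⟨P.height_mem_yRange ht, ?_⟩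
    have : P.heightIso.symm ⟨_, P.height_mem_yRange ht⟩ = ⟨t, ht⟩ :=
      P.heightIso.symm_apply_eq.2 (Subtype.ext (P.coe_heightIso ⟨t, ht⟩).symm)
    rw [xAt, IccExtend_of_mem _ _ (P.height_mem_yRange ht), this]
  · rintro ⟨hy, hx⟩
    refine ⟨P.heightIso.symm ⟨p.2, hy⟩, (P.heightIso.symm ⟨p.2, hy⟩).2, Prod.ext ?_ ?_⟩
    · rw [hx, xAt, IccExtend_of_mem _ _ hy]
    · exact (P.coe_heightIso _).symm.trans
        (congrArg Subtype.val (P.heightIso.apply_symm_apply _))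

theorem mk_xAt_mem_image {y : ℝ} (hy : y ∈ P.yRange) : (P.xAt y, y) ∈ P.image :=
  mem_image_iff.2 ⟨hy, rfl⟩

variable {Q R : UpwardPath}

theorem prec_iff : P.Prec Q ↔ ∃ y ∈ P.yRange ∩ Q.yRange, P.xAt y < Q.xAt y := by
  constructor
  · rintro ⟨p, hp, q, hq, hpq, hlt⟩
    rw [mem_image_iff] at hp hq
    refine ⟨p.2, ⟨hp.1, hpq ▸ hq.1⟩, ?_⟩
    rwa [← hp.2, hpq, ← hq.2]
  · rintro ⟨y, hy, hlt⟩
    exact ⟨_, mk_xAt_mem_image hy.1, _, mk_xAt_mem_image hy.2, rfl, hlt⟩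

theorem not_prec_self (P : UpwardPath) : ¬ P.Prec P := fun h =>
  let ⟨_, _, hlt⟩ := prec_iff.1 h
  hlt.false

theorem ne_of_prec (h : P.Prec Q) : P ≠ Q := by
  rintro rfl
  exact P.not_prec_self h

theorem xAt_ne_of_disjoint (hd : Disjoint P.image Q.image) {y : ℝ}
    (hy : y ∈ P.yRange ∩ Q.yRange) : P.xAt y ≠ Q.xAt y := fun heq =>
  disjoint_left.1 hd (mk_xAt_mem_image hy.1) (heq ▸ mk_xAt_mem_image hy.2)

theorem xAt_lt_of_prec (hd : Disjoint P.image Q.image) (hPQ : P.Prec Q) {y : ℝ}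
    (hy : y ∈ P.yRange ∩ Q.yRange) : P.xAt y < Q.xAt y := by
  obtain ⟨y₀, hy₀, hlt⟩ := prec_iff.1 hPQ
  by_contra! hle
  have hsub : uIcc y₀ y ⊆ P.yRange ∩ Q.yRange :=
    (ordConnected_Icc.inter ordConnected_Icc).uIcc_subset hy₀ hy
  obtain ⟨z, hz, hzero⟩ := intermediate_value_uIcc
    (Q.continuous_xAt.sub P.continuous_xAt).continuousOn
    (mem_uIcc.2 (Or.inr ⟨sub_nonpos.2 hle, (sub_pos.2 hlt).le⟩) : (0 : ℝ) ∈ uIcc _ _)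
  exact xAt_ne_of_disjoint hd (hsub hz) (sub_eq_zero.1 hzero).symm

theorem prec_of_prec_of_prec (hPQ : Disjoint P.image Q.image) (hQR : Disjoint Q.image R.image)
    (h₁ : P.Prec Q) (h₂ : Q.Prec R) (hP : (Q.toFun 1).2 ≤ (P.toFun 1).2)
    (hR : (Q.toFun 1).2 ≤ (R.toFun 1).2) : P.Prec R := by
  obtain ⟨y₁, hy₁, -⟩ := prec_iff.1 h₁
  obtain ⟨y₂, hy₂, -⟩ := prec_iff.1 h₂
  have hQ : (Q.toFun 1).2 ∈ Q.yRange := right_mem_Icc.2 Q.height_zero_le_height_one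
  have hPtop : (Q.toFun 1).2 ∈ P.yRange := ⟨hy₁.1.1.trans hy₁.2.2, hP⟩
  have hRtop : (Q.toFun 1).2 ∈ R.yRange := ⟨hy₂.2.1.trans hy₂.1.2, hR⟩
  exact prec_iff.2 ⟨_, ⟨hPtop, hRtop⟩,
    (xAt_lt_of_prec hPQ h₁ ⟨hPtop, hQ⟩).trans (xAt_lt_of_prec hQR h₂ ⟨hQ, hRtop⟩)⟩

end UpwardPath

theorem transGen_prec_strict_order_general (S : Set UpwardPath)
    (hdisj : S.Pairwise fun P Q => Disjoint P.image Q.image) :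
    Irreflexive (Relation.TransGen fun P Q : S => UpwardPath.Prec P.1 Q.1) ∧
    Transitive (Relation.TransGen fun P Q : S => UpwardPath.Prec P.1 Q.1) ∧
    ∀ P Q : S, Relation.TransGen (fun P Q : S => UpwardPath.Prec P.1 Q.1) P Q →
      ¬ Relation.TransGen (fun P Q : S => UpwardPath.Prec P.1 Q.1) Q P := by
  have hd {P Q : S} (h : P.1.Prec Q.1) : Disjoint P.1.image Q.1.image :=
    hdisj P.2 Q.2 (UpwardPath.ne_of_prec h)
  have hirr : ∀ P : S, ¬ Relation.TransGen (fun P Q : S => P.1.Prec Q.1) P P :=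
    not_transGen_self_of_valley (h := fun P : S => (P.1.toFun 1).2)
      (r := fun P Q : S => P.1.Prec Q.1) (fun P => P.1.not_prec_self) fun _ _ _ hPQ hQR hP hR =>
        UpwardPath.prec_of_prec_of_prec (hd hPQ) (hd hQR) hPQ hQR hP hR
  exact ⟨hirr, fun _ _ _ => Relation.TransGen.trans, fun P _ hPQ hQP => hirr P (hPQ.trans hQP)⟩

/-- For a finite set `S` of pairwise disjoint upward paths, the transitive
closure `≺*` of `≺` restricted to `S` is a strict partial order: irreflexive
and transitive (hence asymmetric). -/
theorem transGen_prec_strict_order (S : Set UpwardPath) (hfin : S.Finite)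
    (hdisj : S.Pairwise fun P Q => Disjoint P.image Q.image) :
    Irreflexive (Relation.TransGen fun P Q : S => UpwardPath.Prec P.1 Q.1) ∧
    Transitive (Relation.TransGen fun P Q : S => UpwardPath.Prec P.1 Q.1) ∧
    ∀ P Q : S, Relation.TransGen (fun P Q : S => UpwardPath.Prec P.1 Q.1) P Q →
      ¬ Relation.TransGen (fun P Q : S => UpwardPath.Prec P.1 Q.1) Q P :=
  transGen_prec_strict_order_general S hdisj
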